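/- arXiv:1706.00803 — 2 statements merged into one kernel-verified Lean document; each statement's English description precedes it below -/
import Mathlib

section
/- Let E be a Banach space, A a densely defined linear operator on E, and φ ∈ [0, π). Suppose A is φ-positive, i.e., ‖(A + λ)⁻¹‖ ≤ M(1 + |λ|)⁻¹ for all λ in the sector S_φ. Let P : ℝⁿ → ℂ be a function with P(ξ) ∈ S_{φ₁} for all ξ, where φ₁ ≤ φ. Then for every λ ∈ S_{φ₂} with φ₁ + φ₂ ≤ φ and φ₁ + φ₂ < π, and every ξ ∈ ℝⁿ, the operator A + λ + P(ξ) is invertible and ‖(A + λ + P(ξ))⁻¹‖ ≤ C(1 + |λ| + |P(ξ)|)⁻¹, where C depends only on M, φ₁, φ₂. -/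
/-- `z` lies in the closed sector `S_φ = {λ : |arg λ| ≤ φ} ∪ {0}`. -/
def inSector (φ : ℝ) (z : ℂ) : Prop := z = 0 ∨ |z.arg| ≤ φ

/-- `A` is a (densely defined, here everywhere defined) φ-positive operator:
`(A + λ)` has a bounded inverse with `‖(A + λ)⁻¹‖ ≤ M (1 + |λ|)⁻¹` for `λ ∈ S_φ`. -/
def IsPhiPositive {E : Type*} [NormedAddCommGroup E] [NormedSpace ℂ E]
    (φ M : ℝ) (A : E →ₗ[ℂ] E) : Prop :=
  ∀ lam : ℂ, inSector φ lam →
    ∃ B : E →L[ℂ] E, (∀ x, B (A x + lam • x) = x) ∧ (∀ x, A (B x) + lam • B x = x) ∧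
      ‖B‖ ≤ M / (1 + ‖lam‖)

open Complex in
lemma sector_add {φ₁ φ₂ : ℝ} (hφ₁ : 0 ≤ φ₁) (hφ₂ : 0 ≤ φ₂) (hπ : φ₁ + φ₂ < Real.pi)
    {a b : ℂ} (ha : inSector φ₁ a) (hb : inSector φ₂ b) :
    inSector (φ₁ + φ₂) (a + b) ∧
    Real.cos ((φ₁ + φ₂)/2) * (‖a‖ + ‖b‖) ≤ ‖a + b‖ := by
  have hc1 : Real.cos ((φ₁ + φ₂)/2) ≤ 1 := Real.cos_le_one _
  rcases ha with rfl | ha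
  · refine ⟨?_, ?_⟩
    · rcases hb with rfl | hb
      · exact Or.inl (by simp)
      · exact Or.inr (by simpa using hb.trans (by linarith))
    · simp only [norm_zero, zero_add]
      nlinarith [norm_nonneg b]
  rcases hb with rfl | hb
  · refine ⟨Or.inr (by simpa using ha.trans (by linarith)), ?_⟩
    simp only [norm_zero, add_zero]
    nlinarith [norm_nonneg a]
  -- main case
  set θ₁ := a.arg with hθ₁def
  set θ₂ := b.arg with hθ₂def
  set ra := ‖a‖ with hradef
  set rb := ‖b‖ with hrbdef
  have hra : 0 ≤ ra := norm_nonneg a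
  have hrb : 0 ≤ rb := norm_nonneg b
  set μ := (θ₁ + θ₂) / 2 with hμdef
  set δ := (θ₁ - θ₂) / 2 with hδdef
  have hδb : |δ| ≤ (φ₁ + φ₂) / 2 := by
    rw [hδdef, abs_div]
    have := abs_sub (θ₁) (θ₂)
    rw [abs_of_pos (by norm_num : (0:ℝ) < 2)]
    have : |θ₁ - θ₂| ≤ φ₁ + φ₂ := (abs_sub _ _).trans (by linarith)
    linarith
  have hμb : |μ| ≤ (φ₁ + φ₂) / 2 := by
    rw [hμdef, abs_div, abs_of_pos (by norm_num : (0:ℝ) < 2)]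
    have : |θ₁ + θ₂| ≤ φ₁ + φ₂ := (abs_add_le _ _).trans (by linarith)
    linarith
  have hhalf : (φ₁ + φ₂) / 2 < Real.pi / 2 := by linarith
  obtain ⟨hδ1, hδ2⟩ := abs_le.mp hδb
  have hcosδpos : 0 < Real.cos δ := Real.cos_pos_of_mem_Ioo ⟨by linarith, by linarith⟩
  have hcosc : Real.cos ((φ₁ + φ₂)/2) ≤ Real.cos δ := by
    rw [← Real.cos_abs δ]
    apply Real.cos_le_cos_of_nonneg_of_le_pi (abs_nonneg _) (by linarith [Real.pi_pos])
    exact hδb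
  set w : ℂ := ↑ra * Complex.exp (↑δ * I) + ↑rb * Complex.exp (↑(-δ) * I) with hwdef
  have key1 : a + b = Complex.exp (↑μ * I) * w := by
    rw [hwdef, mul_add, ← mul_assoc, ← mul_assoc, mul_comm _ (ra:ℂ), mul_comm _ (rb:ℂ),
      mul_assoc, mul_assoc, ← Complex.exp_add, ← Complex.exp_add]
    have e1 : (↑μ * I + ↑δ * I : ℂ) = ↑θ₁ * I := by
      push_cast; rw [hμdef, hδdef]; push_cast; ring
    have e2 : (↑μ * I + ↑(-δ) * I : ℂ) = ↑θ₂ * I := by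
      push_cast; rw [hμdef, hδdef]; push_cast; ring
    rw [e1, e2, hradef, hrbdef, hθ₁def, hθ₂def, Complex.norm_mul_exp_arg_mul_I,
      Complex.norm_mul_exp_arg_mul_I]
  have hre : ∀ (r t : ℝ), ((r:ℂ) * Complex.exp (↑t * I)).re = r * Real.cos t := by
    intro r t
    rw [Complex.mul_re, Complex.exp_ofReal_mul_I_re, Complex.exp_ofReal_mul_I_im]
    simp
  have habsr : ∀ (r t : ℝ), 0 ≤ r → ‖(r:ℂ) * Complex.exp (↑t * I)‖ = r := by
    intro r t hr
    rw [norm_mul, Complex.norm_exp_ofReal_mul_I, mul_one, Complex.norm_real, Real.norm_eq_abs,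
      _root_.abs_of_nonneg hr]
  have hwre : w.re = (ra + rb) * Real.cos δ := by
    rw [hwdef, Complex.add_re, hre, hre, Real.cos_neg]; ring
  have hwle : ‖w‖ ≤ ra + rb := by
    refine (norm_add_le _ _).trans ?_
    rw [habsr _ _ hra, habsr _ _ hrb]
  have habs_eq : ‖a + b‖ = ‖w‖ := by
    rw [key1, norm_mul, Complex.norm_exp_ofReal_mul_I, one_mul]
  have hwge : (ra + rb) * Real.cos δ ≤ ‖w‖ := hwre ▸ Complex.re_le_norm w
  constructor
  · by_cases hab : a + b = 0
    · exact Or.inl hab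
    have hw0 : w ≠ 0 := by
      intro h; apply hab; rw [key1, h, mul_zero]
    have hwabspos : 0 < ‖w‖ := norm_pos_iff.mpr hw0
    have hrarb : 0 < ra + rb := by
      rcases lt_or_eq_of_le (add_nonneg hra hrb) with h | h
      · exact h
      · exfalso; apply hw0
        have h1 : ra = 0 := by linarith
        have h2 : rb = 0 := by linarith
        rw [hwdef, h1, h2]; simp
    have hcosargw : Real.cos |δ| ≤ Real.cos (w.arg) := by
      rw [Complex.cos_arg hw0, Real.cos_abs]
      rw [le_div_iff₀ hwabspos]
      calc Real.cos δ * ‖w‖ ≤ Real.cos δ * (ra + rb) := by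
            exact mul_le_mul_of_nonneg_left hwle hcosδpos.le
        _ = w.re := by rw [hwre]; ring
    have hargw : |w.arg| ≤ |δ| := by
      by_contra h
      push_neg at h
      have h1 : Real.cos |w.arg| < Real.cos |δ| := by
        apply Real.strictAntiOn_cos ⟨abs_nonneg _, by linarith [Real.pi_pos, hδb]⟩
          ⟨abs_nonneg _, Complex.abs_arg_le_pi w⟩ h
      rw [Real.cos_abs w.arg] at h1
      linarith
    have hsum : |μ + w.arg| ≤ φ₁ + φ₂ := by
      calc |μ + w.arg| ≤ |μ| + |w.arg| := abs_add_le _ _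
        _ ≤ (φ₁ + φ₂)/2 + (φ₁ + φ₂)/2 := add_le_add hμb (hargw.trans hδb)
        _ = φ₁ + φ₂ := by ring
    obtain ⟨hs1, hs2⟩ := abs_le.mp hsum
    have harg_eq : (a + b).arg = μ + w.arg := by
      have hform : a + b = ↑(‖w‖) *
          (Complex.cos ↑(μ + w.arg) + Complex.sin ↑(μ + w.arg) * I) := by
        rw [key1]
        conv_lhs => rw [← Complex.norm_mul_exp_arg_mul_I w]
        rw [← Complex.exp_mul_I, mul_left_comm, ← Complex.exp_add]
        congr 2
        push_cast; ring
      rw [hform]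
      exact Complex.arg_mul_cos_add_sin_mul_I hwabspos ⟨by linarith, by linarith⟩
    exact Or.inr (by rw [harg_eq]; exact hsum)
  · calc Real.cos ((φ₁ + φ₂)/2) * (ra + rb) ≤ Real.cos δ * (ra + rb) :=
          mul_le_mul_of_nonneg_right hcosc (by linarith)
      _ = (ra + rb) * Real.cos δ := mul_comm _ _
      _ ≤ ‖w‖ := hwge
      _ = ‖a + b‖ := habs_eq.symm

theorem resolvent_estimate_shifted {E : Type*} [NormedAddCommGroup E] [NormedSpace ℂ E]
    [CompleteSpace E] (A : E →ₗ[ℂ] E) (φ φ₁ φ₂ M : ℝ)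
    (hφ₁ : 0 ≤ φ₁) (hφ₂ : 0 ≤ φ₂) (hφ : φ < Real.pi)
    (hpos : IsPhiPositive φ M A) (n : ℕ) (P : (Fin n → ℝ) → ℂ)
    (hP : ∀ ξ, inSector φ₁ (P ξ))
    (h12 : φ₁ + φ₂ ≤ φ) (h12π : φ₁ + φ₂ < Real.pi) :
    ∃ C > (0 : ℝ), ∀ lam : ℂ, inSector φ₂ lam → ∀ ξ : Fin n → ℝ,
      ∃ B : E →L[ℂ] E,
        (∀ x, B (A x + (lam + P ξ) • x) = x) ∧
        (∀ x, A (B x) + (lam + P ξ) • B x = x) ∧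
        ‖B‖ ≤ C / (1 + ‖lam‖ + ‖P ξ‖) := by
  obtain ⟨B₀, -, -, hB₀⟩ := hpos 0 (Or.inl rfl)
  have hM : 0 ≤ M := le_trans (norm_nonneg B₀) (by simpa using hB₀)
  set c := Real.cos ((φ₁ + φ₂) / 2) with hcdef
  have hc : 0 < c := Real.cos_pos_of_mem_Ioo ⟨by linarith [Real.pi_pos], by linarith⟩
  have hc1 : c ≤ 1 := Real.cos_le_one _
  refine ⟨max (M / c) 1, lt_of_lt_of_le one_pos (le_max_right _ _), ?_⟩
  intro lam hlam ξ
  obtain ⟨hsec, hnorm⟩ := sector_add hφ₂ hφ₁ (by linarith) hlam (hP ξ)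
  rw [show φ₂ + φ₁ = φ₁ + φ₂ by ring] at hsec hnorm
  have hsecφ : inSector φ (lam + P ξ) := by
    rcases hsec with h | h
    · exact Or.inl h
    · exact Or.inr (h.trans h12)
  obtain ⟨B, hB1, hB2, hB3⟩ := hpos (lam + P ξ) hsecφ
  refine ⟨B, hB1, hB2, ?_⟩
  set x := ‖lam‖
  set y := ‖P ξ‖
  have hx : 0 ≤ x := norm_nonneg _
  have hy : 0 ≤ y := norm_nonneg _
  have hkey : c * (1 + x + y) ≤ 1 + ‖lam + P ξ‖ := by nlinarith
  have hpos1 : 0 < 1 + x + y := by linarith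
  calc ‖B‖ ≤ M / (1 + ‖lam + P ξ‖) := hB3
    _ ≤ M / (c * (1 + x + y)) :=
        div_le_div_of_nonneg_left hM (by positivity) hkey
    _ = (M / c) / (1 + x + y) := (div_div M c _).symm
    _ ≤ max (M / c) 1 / (1 + x + y) := by gcongr; exact le_max_left _ _
end

section
/- Let E be a Banach space, A a φ-positive operator on E with φ > 0, O an operator with O + λ invertible for all λ ∈ S_φ and satisfying ‖λ(O+λ)⁻¹‖ ≤ C and ‖O(O+λ)⁻¹‖ ≤ C for λ ∈ S_φ, and let L be an operator with D(O) ⊆ D(L) such that for every h ∈ (0, h₀] and some μ ∈ (0,1): ‖Lu‖ ≤ C(h^μ ‖Ou‖ + h^{−(1−μ)}‖u‖) for all u ∈ D(O). Then for λ ∈ S_φ with |λ| sufficiently large, ‖L(O+λ)⁻¹‖_{B(E)} < 1, and consequently O + L + λ has a bounded inverse. -/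
theorem perturbation_small_for_large_lambda {E : Type*} [NormedAddCommGroup E]
    [NormedSpace ℂ E] [CompleteSpace E] (O L : E →ₗ[ℂ] E) (φ C h₀ μ : ℝ)
    (hφ : 0 < φ) (hφπ : φ < Real.pi) (hC : 0 < C) (hh₀ : 0 < h₀)
    (hμ0 : 0 < μ) (hμ1 : μ < 1)
    (res : ∀ lam : ℂ, inSector φ lam → ∃ B : E →L[ℂ] E,
      (∀ x, B (O x + lam • x) = x) ∧ (∀ x, O (B x) + lam • B x = x) ∧
      (∀ x, ‖lam‖ * ‖B x‖ ≤ C * ‖x‖) ∧ (∀ x, ‖O (B x)‖ ≤ C * ‖x‖))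
    (hL : ∀ h : ℝ, 0 < h → h ≤ h₀ → ∀ u : E,
      ‖L u‖ ≤ C * (h ^ μ * ‖O u‖ + h ^ (-(1 - μ)) * ‖u‖)) :
    ∃ R > (0 : ℝ), ∀ lam : ℂ, inSector φ lam → R ≤ ‖lam‖ →
      (∀ B : E →L[ℂ] E,
        (∀ x, B (O x + lam • x) = x) → (∀ x, O (B x) + lam • B x = x) →
        ∃ r < (1 : ℝ), ∀ y : E, ‖L (B y)‖ ≤ r * ‖y‖) ∧
      ∃ B' : E →L[ℂ] E,
        (∀ x, B' (O x + L x + lam • x) = x) ∧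
        (∀ x, O (B' x) + L (B' x) + lam • B' x = x) := by
  have hC2 : (0:ℝ) < 4 * C ^ 2 := by positivity
  set h : ℝ := min h₀ ((4 * C ^ 2)⁻¹ ^ (1 / μ)) with hh
  have hhpos : 0 < h := lt_min hh₀ (Real.rpow_pos_of_pos (by positivity) _)
  have hhle : h ≤ h₀ := min_le_left _ _
  have hmu : h ^ μ ≤ (4 * C ^ 2)⁻¹ := by
    calc h ^ μ ≤ ((4 * C ^ 2)⁻¹ ^ (1 / μ)) ^ μ :=
          Real.rpow_le_rpow hhpos.le (min_le_right _ _) hμ0.le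
      _ = (4 * C ^ 2)⁻¹ := by
          rw [← Real.rpow_mul (by positivity), one_div, inv_mul_cancel₀ hμ0.ne',
            Real.rpow_one]
  have hbpos : 0 < h ^ (-(1 - μ)) := Real.rpow_pos_of_pos hhpos _
  refine ⟨max 1 (4 * C ^ 2 * h ^ (-(1 - μ))), lt_of_lt_of_le one_pos (le_max_left _ _), ?_⟩
  intro lam hsec hR
  obtain ⟨B₀, hB₀l, hB₀r, hB₀n, hOB₀⟩ := res lam hsec
  have hlam1 : (1:ℝ) ≤ ‖lam‖ := le_trans (le_max_left _ _) hR
  have hq : 4 * C ^ 2 * h ^ (-(1 - μ)) ≤ ‖lam‖ := le_trans (le_max_right _ _) hR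
  -- The key estimate : ‖L (B₀ y)‖ ≤ (1/2) ‖y‖
  have key : ∀ y : E, ‖L (B₀ y)‖ ≤ 1 / 2 * ‖y‖ := by
    intro y
    have h1 := hL h hhpos hhle (B₀ y)
    have h2 : ‖O (B₀ y)‖ ≤ C * ‖y‖ := hOB₀ y
    have h3 : ‖lam‖ * ‖B₀ y‖ ≤ C * ‖y‖ := hB₀n y
    have hA : C * (h ^ μ * ‖O (B₀ y)‖) ≤ 1 / 4 * ‖y‖ := by
      have e1 : h ^ μ * ‖O (B₀ y)‖ ≤ (4 * C ^ 2)⁻¹ * (C * ‖y‖) :=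
        mul_le_mul hmu h2 (norm_nonneg _) (by positivity)
      have e2 : C * ((4 * C ^ 2)⁻¹ * (C * ‖y‖)) = 1 / 4 * ‖y‖ := by
        field_simp
      calc C * (h ^ μ * ‖O (B₀ y)‖) ≤ C * ((4 * C ^ 2)⁻¹ * (C * ‖y‖)) :=
            mul_le_mul_of_nonneg_left e1 hC.le
        _ = 1 / 4 * ‖y‖ := e2
    have hB : C * (h ^ (-(1 - μ)) * ‖B₀ y‖) ≤ 1 / 4 * ‖y‖ := by
      have e1 : 4 * C ^ 2 * h ^ (-(1 - μ)) * ‖B₀ y‖ ≤ ‖lam‖ * ‖B₀ y‖ :=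
        mul_le_mul_of_nonneg_right hq (norm_nonneg _)
      nlinarith [norm_nonneg (B₀ y), norm_nonneg y, hC]
    linarith
  constructor
  · -- first conjunct: any resolvent B agrees with B₀, so the bound transfers
    intro B hBl hBr
    refine ⟨1 / 2, by norm_num, fun y => ?_⟩
    have hBeq : B y = B₀ y := by
      have := hBl (B₀ y)
      rw [hB₀r y] at this
      exact this
    rw [hBeq]
    exact key y
  · -- second conjunct: Neumann series
    set T : E →L[ℂ] E := LinearMap.mkContinuous (L ∘ₗ (B₀ : E →ₗ[ℂ] E)) (1 / 2)
      (fun y => by simpa using key y) with hT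
    have hTapp : ∀ w, T w = L (B₀ w) := fun w => rfl
    have hTnorm : ‖-T‖ < 1 := by
      rw [norm_neg]
      exact lt_of_le_of_lt (LinearMap.mkContinuous_norm_le _ (by norm_num) _) (by norm_num)
    set U : (E →L[ℂ] E)ˣ := Units.oneSub (-T) hTnorm with hU
    have hUapp : ∀ w, (U : E →L[ℂ] E) w = w + T w := by
      intro w
      show (1 - -T) w = w + T w
      simp [ContinuousLinearMap.sub_apply]
    have hUVz : ∀ z, (U : E →L[ℂ] E) ((↑U⁻¹ : E →L[ℂ] E) z) = z := by
      intro z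
      have := DFunLike.congr_fun U.mul_inv z
      rwa [ContinuousLinearMap.mul_apply, ContinuousLinearMap.one_apply] at this
    have hVUz : ∀ w, (↑U⁻¹ : E →L[ℂ] E) ((U : E →L[ℂ] E) w) = w := by
      intro w
      have := DFunLike.congr_fun U.inv_mul w
      rwa [ContinuousLinearMap.mul_apply, ContinuousLinearMap.one_apply] at this
    refine ⟨B₀.comp (↑U⁻¹ : E →L[ℂ] E), ?_, ?_⟩
    · intro x
      have hw : (U : E →L[ℂ] E) (O x + lam • x) = O x + L x + lam • x := by
        rw [hUapp, hTapp, hB₀l x]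
        abel
      show B₀ ((↑U⁻¹ : E →L[ℂ] E) (O x + L x + lam • x)) = x
      rw [← hw, hVUz, hB₀l]
    · intro z
      show O (B₀ ((↑U⁻¹ : E →L[ℂ] E) z)) + L (B₀ ((↑U⁻¹ : E →L[ℂ] E) z))
          + lam • (B₀ ((↑U⁻¹ : E →L[ℂ] E) z)) = z
      set w := (↑U⁻¹ : E →L[ℂ] E) z with hwdef
      have h1 : O (B₀ w) + lam • B₀ w = w := hB₀r w
      have h2 : (U : E →L[ℂ] E) w = z := hUVz z
      rw [hUapp, hTapp] at h2
      calc O (B₀ w) + L (B₀ w) + lam • B₀ w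
          = (O (B₀ w) + lam • B₀ w) + L (B₀ w) := by abel
        _ = w + L (B₀ w) := by rw [h1]
        _ = z := h2
end
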